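/- arXiv:2605.24727 — 3 statements merged into one kernel-verified Lean document; each statement's English description precedes it below -/
import Mathlib

section
/- Prefix-free complexity is bounded by plain complexity up to a logarithmic term: Fix a universal conditional function U and a universal conditional prefix-free function V over the same alphabet Σ and self-delimiting encoding. Then there exists a constant c ∈ ℕ, independent of x and y, such that for every x, y ∈ Σ*: K_V(y∣x) ≤ C_U(y∣x) + 2·log_{|Σ|}(C_U(y∣x) + 1) + c. -/
open scoped Classical ENNReal NNReal

namespace Quad

/-- A set of strings is prefix-free: none of its elements is a proper prefix of another. -/
def PrefixFree {β : Type*} (S : Set (List β)) : Prop :=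
  ∀ a ∈ S, ∀ b ∈ S, a <+: b → a = b

/-- A computable (decidable) set of strings. -/
def CompSet {α : Type} [Primcodable α] (S : Set (List α)) : Prop :=
  ComputablePred (· ∈ S)

/-- A self-delimiting encoding on Σ*. -/
structure SelfDelim (α : Type) [Primcodable α] where
  enc : List α → List α
  comp : Computable enc
  inj : Function.Injective enc
  img_comp : CompSet (Set.range enc)
  img_pf : PrefixFree (Set.range enc)

/-- A universal conditional partial computable function. -/
structure UnivCond {α : Type} [Primcodable α] (sd : SelfDelim α) where
  U : List α →. List α
  partrec : Partrec U
  progs : Set (List α)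
  progs_comp : CompSet progs
  progs_pf : PrefixFree progs
  univ : ∀ f : List α →. List α, Partrec f →
    ∃ p ∈ progs, ∀ x w : List α, U (sd.enc x ++ p ++ w) = f (sd.enc x ++ w)

/-- Conditional plain Kolmogorov complexity `C_U(y∣x)`. -/
noncomputable def CU {α : Type} [Primcodable α] {sd : SelfDelim α} (U : UnivCond sd)
    (y x : List α) : ℕ :=
  sInf {m | ∃ p : List α, p.length = m ∧ U.U (sd.enc x ++ p) = Part.some y}

/-- A conditional prefix-free partial computable function. -/
def CondPF {α : Type} [Primcodable α] (sd : SelfDelim α) (g : List α →. List α) : Prop :=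
  ∀ x : List α, PrefixFree {w : List α | (g (sd.enc x ++ w)).Dom}

/-- A universal conditional prefix-free function. -/
structure UnivCondPF {α : Type} [Primcodable α] (sd : SelfDelim α) where
  V : List α →. List α
  partrec : Partrec V
  condPF : CondPF sd V
  progs : Set (List α)
  progs_comp : CompSet progs
  progs_pf : PrefixFree progs
  univ : ∀ g : List α →. List α, Partrec g → CondPF sd g →
    ∃ p ∈ progs, ∀ x w : List α, V (sd.enc x ++ p ++ w) = g (sd.enc x ++ w)

/-- Conditional prefix-free Kolmogorov complexity `K_V(y∣x)`. -/
noncomputable def KV {α : Type} [Primcodable α] {sd : SelfDelim α} (V : UnivCondPF sd)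
    (y x : List α) : ℕ :=
  sInf {m | ∃ p : List α, p.length = m ∧ V.V (sd.enc x ++ p) = Part.some y}

/-- A fixed injective encoding of a countable set into Σ* with computable image. -/
structure GoodEnc (α : Type) [Primcodable α] (X : Type) where
  enc : X → List α
  inj : Function.Injective enc
  img_comp : CompSet (Set.range enc)

/-- A real-valued function on a countable set is computable if a computable rational
function approximates it to arbitrary precision `b^(-k)`. -/
def ComputableRealFun {Z : Type} [Primcodable Z] (b : ℕ) (f : Z → ℝ) : Prop :=
  ∃ g : ℕ → Z → ℚ, Computable₂ g ∧ ∀ (k : ℕ) (z : Z), |(g k z : ℝ) - f z| ≤ (b : ℝ) ^ (-(k : ℤ))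

/-- A computable conditional probability mass function `Q(y∣x) = Q x y`. -/
def IsCondPMF {X Y : Type} [Primcodable X] [Primcodable Y] (b : ℕ) (Q : X → Y → ℝ) : Prop :=
  (∀ x y, 0 ≤ Q x y) ∧ (∀ x y, Q x y ≤ 1) ∧ (∀ x, HasSum (fun y => Q x y) 1) ∧
    ComputableRealFun b (fun z : X × Y => Q z.1 z.2)

/-- `e` is a completely faithful explanation of `f` under the interpretation function. -/
def Faithful {Λ Z : Type} [Primcodable Λ] [Primcodable Z]
    (b : ℕ) (Interp : List Λ × ℕ × Z →. ℚ) (f : Z → ℝ) (e : List Λ) : Prop :=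
  ∀ (z : Z) (k : ℕ), ∃ r : ℚ, Interp (e, k, z) = Part.some r ∧
    |(r : ℝ) - f z| < (b : ℝ) ^ (-(k : ℤ))

/-- `−log_b t`, with `−log 0 := +∞`, valued in extended reals. -/
noncomputable def negLog (b : ℕ) (t : ℝ) : EReal :=
  if t ≤ 0 then ⊤ else ((-(Real.logb (b : ℝ) t) : ℝ) : EReal)

/-- `−log_b t`, with `−log 0 := +∞`, valued in `ℝ≥0∞`. -/
noncomputable def negLogE (b : ℕ) (t : ℝ) : ℝ≥0∞ :=
  if t ≤ 0 then ⊤ else ENNReal.ofReal (-(Real.logb (b : ℝ) t))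

/-- Maximal code length of a character encoding. -/
def LLen {α Λ : Type} [Fintype Λ] (encΛ : Λ → List α) : ℕ :=
  Finset.univ.sup fun a => (encΛ a).length

/-- `p` is a program for `U` computing arbitrary-precision approximations of the
real-valued function `f`, conditioned on the code `xcode`. -/
def IsApproxProgC {α Z : Type} [Primcodable α] {sd : SelfDelim α} (U : UnivCond sd)
    (encZ : Z → List α) (encN : ℕ → List α) (encQ : ℚ → List α) (b : ℕ)
    (f : Z → ℝ) (xcode : List α) (p : List α) : Prop :=
  ∀ (z : Z) (k : ℕ), ∃ r : ℚ,
    U.U (sd.enc (encZ z) ++ sd.enc (encN k) ++ sd.enc xcode ++ p) = Part.some (encQ r) ∧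
    |(r : ℝ) - f z| ≤ (b : ℝ) ^ (-(k : ℤ))

/-- Conditional plain Kolmogorov complexity `C_U(f∣x)` of a real-valued function. -/
noncomputable def CUFun {α Z : Type} [Primcodable α] {sd : SelfDelim α} (U : UnivCond sd)
    (encZ : Z → List α) (encN : ℕ → List α) (encQ : ℚ → List α) (b : ℕ)
    (f : Z → ℝ) (xcode : List α) : ℕ :=
  sInf {m | ∃ p : List α, p.length = m ∧ IsApproxProgC U encZ encN encQ b f xcode p}

/-- `p` is a program for `U` computing arbitrary-precision approximations of `f`. -/
def IsApproxProg {α Z : Type} [Primcodable α] {sd : SelfDelim α} (U : UnivCond sd)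
    (encZ : Z → List α) (encN : ℕ → List α) (encQ : ℚ → List α) (b : ℕ)
    (f : Z → ℝ) (p : List α) : Prop :=
  ∀ (z : Z) (k : ℕ), ∃ r : ℚ,
    U.U (sd.enc (encZ z) ++ sd.enc (encN k) ++ p) = Part.some (encQ r) ∧
    |(r : ℝ) - f z| ≤ (b : ℝ) ^ (-(k : ℤ))

/-- Unconditional plain Kolmogorov complexity `C_U(f)` of a real-valued function. -/
noncomputable def CUFun0 {α Z : Type} [Primcodable α] {sd : SelfDelim α} (U : UnivCond sd)
    (encZ : Z → List α) (encN : ℕ → List α) (encQ : ℚ → List α) (b : ℕ)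
    (f : Z → ℝ) : ℕ :=
  sInf {m | ∃ p : List α, p.length = m ∧ IsApproxProg U encZ encN encQ b f p}

/-- `p ∈ PFPrograms_V(f∣x)`. -/
def IsPFApproxProg {α Z : Type} [Primcodable α] {sd : SelfDelim α} (V : UnivCondPF sd)
    (encZ : Z → List α) (encN : ℕ → List α) (encQ : ℚ → List α) (b : ℕ)
    (f : Z → ℝ) (xcode : List α) (p : List α) : Prop :=
  ∀ (z : Z) (k : ℕ), ∃ r : ℚ,
    V.V (sd.enc (encZ z) ++ sd.enc (encN k) ++ sd.enc xcode ++ p) = Part.some (encQ r) ∧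
    |(r : ℝ) - f z| ≤ (b : ℝ) ^ (-(k : ℤ))

/-- Conditional prefix-free Kolmogorov complexity `K_V(f∣x)` of a real-valued function. -/
noncomputable def KVFun {α Z : Type} [Primcodable α] {sd : SelfDelim α} (V : UnivCondPF sd)
    (encZ : Z → List α) (encN : ℕ → List α) (encQ : ℚ → List α) (b : ℕ)
    (f : Z → ℝ) (xcode : List α) : ℕ :=
  sInf {m | ∃ p : List α, p.length = m ∧ IsPFApproxProg V encZ encN encQ b f xcode p}

/-!
A shortest plain program `p` for `y` given `x` becomes a prefix-free one once it is preceded by a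
self-delimiting description of its length: the base-`|Σ|` digits of `|p|`, each written twice
and closed by the unequal pair `0 1`, which costs `2 log (|p| + 1) + O(1)` symbols. The machine
that reads `x̄`, then such a header for `n`, then exactly `n` symbols, and only then simulates `U`,
halts on a prefix-free set of inputs for each `x`, so `V` simulates it at a constant overhead.
-/

theorem rfind_decide_eq_some {P : ℕ → Prop} {k : ℕ} (h : ∀ m, P m ↔ m = k) :
    Nat.rfind (fun m => Part.some (decide (P m))) = Part.some k :=
  Part.eq_some_iff.2 <| Nat.mem_rfind.2
    ⟨by simp [h], fun hm => by simp [h, hm.ne]⟩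

theorem PrefixFree.eq_of_isPrefix {β : Type*} {S : Set (List β)} (hS : PrefixFree S)
    {a b v : List β} (ha : a ∈ S) (hb : b ∈ S) (hav : a <+: v) (hbv : b <+: v) : a = b := by
  rcases le_total a.length b.length with h | h
  · exact hS a ha b hb (List.prefix_of_prefix_length_le hav hbv h)
  · exact (hS b hb a ha (List.prefix_of_prefix_length_le hbv hav h)).symm

section LengthPrefixed

variable {α : Type*} {S : Set (List α)} {c : ℕ → List α}

/-- `v = s ++ c n ++ p` with `s = v.take i ∈ S` and `p.length = n`. -/
def IsSplit (S : Set (List α)) (c : ℕ → List α) (v : List α) (i n : ℕ) : Prop :=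
  v.take i ∈ S ∧ c n <+: v.drop i ∧ v.length = i + (c n).length + n

theorem isSplit_append_iff (hS : PrefixFree S) {s w : List α} (hs : s ∈ S) {i n : ℕ} :
    IsSplit S c (s ++ w) i n ↔ i = s.length ∧ c n <+: w ∧ w.length = (c n).length + n := by
  constructor
  · rintro ⟨hi, hcn, hlen⟩
    have htake : (s ++ w).take i = s :=
      hS.eq_of_isPrefix hi hs (List.take_prefix _ _) (List.prefix_append _ _)
    have hi : i = s.length := by
      have := congrArg List.length htake
      simp only [List.length_take, List.length_append] at this hlen
      omega
    subst hi
    rw [List.drop_left] at hcn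
    simp only [List.length_append] at hlen
    exact ⟨rfl, hcn, by omega⟩
  · rintro ⟨rfl, hcn, hlen⟩
    refine ⟨by rwa [List.take_left], by rwa [List.drop_left], ?_⟩
    simp only [List.length_append]
    omega

theorem eq_of_isPrefix_of_isPrefix (hinj : Function.Injective c) (hpf : PrefixFree (Set.range c))
    {w : List α} {n m : ℕ} (hn : c n <+: w) (hm : c m <+: w) : n = m :=
  hinj (hpf.eq_of_isPrefix ⟨n, rfl⟩ ⟨m, rfl⟩ hn hm)

/-- Reads a condition `s ∈ S`, then a header `c n`, then exactly `n` further symbols `p`, and runs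
`f (s ++ p)`. The split is searched for as `k = Nat.pair i n`; it is unique when `S` and
`range c` are prefix-free. -/
noncomputable def lengthPrefixed (S : Set (List α)) (c : ℕ → List α) (f : List α →. List α) :
    List α →. List α := fun v =>
  (Nat.rfind fun k => Part.some (decide (IsSplit S c v k.unpair.1 k.unpair.2))).bind fun k =>
    f (v.take k.unpair.1 ++ v.drop (k.unpair.1 + (c k.unpair.2).length))

theorem lengthPrefixed_append (hS : PrefixFree S) (hinj : Function.Injective c)
    (hpf : PrefixFree (Set.range c)) (f : List α →. List α) {s p : List α} (hs : s ∈ S) {n : ℕ}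
    (hp : p.length = n) : lengthPrefixed S c f (s ++ (c n ++ p)) = f (s ++ p) := by
  have hsplit : ∀ k, IsSplit S c (s ++ (c n ++ p)) k.unpair.1 k.unpair.2 ↔
      k = Nat.pair s.length n := by
    intro k
    rw [isSplit_append_iff hS hs]
    constructor
    · rintro ⟨hi, hcm, -⟩
      have hm := eq_of_isPrefix_of_isPrefix hinj hpf hcm (List.prefix_append _ _)
      rw [← hi, ← hm, Nat.pair_unpair]
    · rintro rfl
      simp [hp]
  rw [lengthPrefixed, rfind_decide_eq_some hsplit, Part.bind_some, Nat.unpair_pair,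
    List.take_left, ← List.drop_drop, List.drop_left, List.drop_left]

theorem exists_of_dom_lengthPrefixed (hS : PrefixFree S) {f : List α →. List α} {s w : List α}
    (hs : s ∈ S) (h : (lengthPrefixed S c f (s ++ w)).Dom) :
    ∃ n, c n <+: w ∧ w.length = (c n).length + n := by
  have hk := Nat.rfind_spec (Part.get_mem h.1)
  simp only [Part.mem_some_iff, eq_comm (a := true), decide_eq_true_eq] at hk
  obtain ⟨-, hcn, hlen⟩ := (isSplit_append_iff hS hs).1 hk
  exact ⟨_, hcn, hlen⟩

end LengthPrefixed

section Computability

variable {α : Type} [Primcodable α] {S : Set (List α)} {c : ℕ → List α}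

theorem condPF_lengthPrefixed (sd : SelfDelim α) (hinj : Function.Injective c)
    (hpf : PrefixFree (Set.range c)) (f : List α →. List α) :
    CondPF sd (lengthPrefixed (Set.range sd.enc) c f) := by
  intro x w₁ h₁ w₂ h₂ h₁₂
  obtain ⟨n₁, hc₁, hl₁⟩ := exists_of_dom_lengthPrefixed sd.img_pf ⟨x, rfl⟩ h₁
  obtain ⟨n₂, hc₂, hl₂⟩ := exists_of_dom_lengthPrefixed sd.img_pf ⟨x, rfl⟩ h₂
  obtain rfl := eq_of_isPrefix_of_isPrefix hinj hpf (hc₁.trans h₁₂) hc₂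
  exact h₁₂.eq_of_length (by omega)

theorem computablePred_isSplit (hS : CompSet S) (hc : Computable c) :
    ComputablePred fun q : List α × ℕ => IsSplit S c q.1 q.2.unpair.1 q.2.unpair.2 := by
  obtain ⟨χ, hχ, hSχ⟩ := ComputablePred.computable_iff.1 hS
  have hi : Computable fun q : List α × ℕ => q.2.unpair.1 :=
    Computable.fst.comp (Computable.unpair.comp Computable.snd)
  have hcn : Computable fun q : List α × ℕ => c q.2.unpair.2 :=
    hc.comp (Computable.snd.comp (Computable.unpair.comp Computable.snd))
  have htake : Computable fun q : List α × ℕ => q.1.take q.2.unpair.1 :=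
    (Primrec.list_take.to_comp).comp hi Computable.fst
  have hdrop : Computable fun q : List α × ℕ => q.1.drop q.2.unpair.1 :=
    (Primrec.list_drop.to_comp).comp hi Computable.fst
  have hpre : Computable fun q : List α × ℕ =>
      decide (c q.2.unpair.2 = (q.1.drop q.2.unpair.1).take (c q.2.unpair.2).length) :=
    (Primrec.eq.decide.to_comp).comp hcn
      ((Primrec.list_take.to_comp).comp (Primrec.list_length.to_comp.comp hcn) hdrop)
  have hlen : Computable fun q : List α × ℕ =>
      decide (q.1.length = q.2.unpair.1 + (c q.2.unpair.2).length + q.2.unpair.2) :=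
    (Primrec.eq.decide.to_comp).comp (Primrec.list_length.to_comp.comp Computable.fst)
      ((Primrec.nat_add.to_comp).comp ((Primrec.nat_add.to_comp).comp hi
        (Primrec.list_length.to_comp.comp hcn))
        (Computable.snd.comp (Computable.unpair.comp Computable.snd)))
  refine ComputablePred.computable_iff.2 ⟨_, (Primrec.and.to_comp).comp
    ((Primrec.and.to_comp).comp (hχ.comp htake) hpre) hlen, ?_⟩
  funext q
  have hmem : (q.1.take q.2.unpair.1 ∈ S) = (χ (q.1.take q.2.unpair.1) = true) :=
    congrFun hSχ _
  simp only [IsSplit, hmem, List.prefix_iff_eq_take, Bool.and_eq_true, decide_eq_true_eq,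
    and_assoc]

theorem partrec_lengthPrefixed (hS : CompSet S) (hc : Computable c) {f : List α →. List α}
    (hf : Partrec f) : Partrec (lengthPrefixed S c f) := by
  have hi : Computable fun q : List α × ℕ => q.2.unpair.1 :=
    Computable.fst.comp (Computable.unpair.comp Computable.snd)
  have hcn : Computable fun q : List α × ℕ => c q.2.unpair.2 :=
    hc.comp (Computable.snd.comp (Computable.unpair.comp Computable.snd))
  have harg : Computable fun q : List α × ℕ =>
      q.1.take q.2.unpair.1 ++ q.1.drop (q.2.unpair.1 + (c q.2.unpair.2).length) :=
    (Primrec.list_append.to_comp).comp ((Primrec.list_take.to_comp).comp hi Computable.fst)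
      ((Primrec.list_drop.to_comp).comp ((Primrec.nat_add.to_comp).comp hi
        (Primrec.list_length.to_comp.comp hcn)) Computable.fst)
  exact (Partrec.rfind (p := fun v k => Part.some (decide (IsSplit S c v k.unpair.1 k.unpair.2)))
    (computablePred_isSplit hS hc).decide.partrec).bind (hf.comp harg)

end Computability

section Complexity

variable {α : Type} [Primcodable α] {sd : SelfDelim α}

theorem exists_length_eq_CU (U : UnivCond sd) (x y : List α) :
    ∃ p : List α, p.length = CU U y x ∧ U.U (sd.enc x ++ p) = Part.some y := by
  obtain ⟨p, -, hp⟩ := U.univ (fun _ => Part.some y) (Partrec.const' _)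
  exact Nat.sInf_mem (s := {m | ∃ p : List α, p.length = m ∧ U.U (sd.enc x ++ p) = Part.some y})
    ⟨p.length, p, rfl, by simpa using hp x []⟩

theorem KV_le_length (V : UnivCondPF sd) {x y p : List α}
    (h : V.V (sd.enc x ++ p) = Part.some y) : KV V y x ≤ p.length :=
  Nat.sInf_le ⟨p, rfl, h⟩

/-- The prefix-free program is `q ++ c |p| ++ p`, where `q` is a `V`-program for
`lengthPrefixed` and `p` a shortest `U`-program. -/
theorem exists_KV_le_CU_add_length_code (U : UnivCond sd) (V : UnivCondPF sd) {c : ℕ → List α}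
    (hc : Computable c) (hinj : Function.Injective c) (hpf : PrefixFree (Set.range c)) :
    ∃ k : ℕ, ∀ x y : List α, KV V y x ≤ CU U y x + (c (CU U y x)).length + k := by
  obtain ⟨q, -, hq⟩ := V.univ _ (partrec_lengthPrefixed sd.img_comp hc U.partrec)
    (condPF_lengthPrefixed sd hinj hpf U.U)
  refine ⟨q.length, fun x y => ?_⟩
  obtain ⟨p, hp, hpy⟩ := exists_length_eq_CU U x y
  have hV : V.V (sd.enc x ++ (q ++ (c (CU U y x) ++ p))) = Part.some y := by
    rw [← List.append_assoc, hq, lengthPrefixed_append sd.img_pf hinj hpf _ ⟨x, rfl⟩ hp, hpy]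
  calc KV V y x ≤ (q ++ (c (CU U y x) ++ p)).length := KV_le_length V hV
    _ = CU U y x + (c (CU U y x)).length + q.length := by
      simp only [List.length_append, hp]
      omega

end Complexity

def stutter {β : Type*} (l : List β) : List β := l.flatMap fun a => [a, a]

@[simp]
theorem stutter_nil {β : Type*} : stutter ([] : List β) = [] := rfl

@[simp]
theorem stutter_cons {β : Type*} (a : β) (l : List β) :
    stutter (a :: l) = a :: a :: stutter l := rfl

theorem length_stutter {β : Type*} (l : List β) : (stutter l).length = 2 * l.length := by
  induction l with
  | nil => rfl
  | cons a l ih => simp only [stutter_cons, List.length_cons, ih]; ring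

/-- The first unequal pair ends the code. -/
theorem eq_of_stutter_append_prefix {β : Type*} {a a' : β} (h : a ≠ a') :
    ∀ {l₁ l₂ : List β}, stutter l₁ ++ [a, a'] <+: stutter l₂ ++ [a, a'] → l₁ = l₂
  | [], [], _ => rfl
  | [], d :: l₂, hp => by
    simp only [stutter_nil, List.nil_append, stutter_cons, List.cons_append,
      List.cons_prefix_cons] at hp
    exact absurd (hp.1.trans hp.2.1.symm) h
  | d :: l₁, [], hp => by
    simp only [stutter_cons, List.cons_append, stutter_nil, List.nil_append,
      List.cons_prefix_cons] at hp
    exact absurd (hp.1.symm.trans hp.2.1) h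
  | d :: l₁, e :: l₂, hp => by
    simp only [stutter_cons, List.cons_append, List.cons_prefix_cons] at hp
    rw [hp.1, eq_of_stutter_append_prefix h hp.2.2]

theorem primrec_digits {b : ℕ} (hb : 1 < b) : Primrec (Nat.digits b) := by
  open Primrec in
  have hg : Primrec₂ fun (_ : Unit) (l : List (List ℕ)) =>
      if l.length = 0 then some [] else l[l.length / b]?.map (l.length % b :: ·) :=
    Primrec.ite (PrimrecRel.comp Primrec.eq (list_length.comp snd) (const 0)) (const _)
      (option_map (list_getElem?.comp snd (nat_div.comp (list_length.comp snd) (const b)))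
        (list_cons.comp (nat_mod.comp (list_length.comp (snd.comp fst)) (const b)) snd).to₂)
  refine (Primrec.nat_strong_rec (fun _ n => Nat.digits b n) hg fun _ n => ?_).comp
    (Primrec.const ()) Primrec.id
  rcases Nat.eq_zero_or_pos n with rfl | hn
  · simp
  · simp [hn.ne', Nat.div_lt_self hn hb, Nat.digits_def' hb hn]

theorem length_digits_le_logb {b : ℕ} (hb : 1 < b) (n : ℕ) :
    ((Nat.digits b n).length : ℝ) ≤ Real.logb b (n + 1) + 1 := by
  rcases Nat.eq_zero_or_pos n with rfl | hn
  · simp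
  rw [Nat.length_digits b n hb hn.ne']
  have hlog : Real.logb b n ≤ Real.logb b (n + 1) :=
    Real.logb_le_logb_of_le (by exact_mod_cast hb) (by exact_mod_cast hn) (by linarith)
  push_cast
  linarith [Real.natLog_le_logb n b]

section NumeralCode

variable {α : Type} [Fintype α]

noncomputable def digitSymbol (a₀ : α) (d : ℕ) : α :=
  (Finset.univ : Finset α).toList.getD d a₀

theorem idxOf_digitSymbol [DecidableEq α] (a₀ : α) {d : ℕ} (hd : d < Fintype.card α) :
    (Finset.univ : Finset α).toList.idxOf (digitSymbol a₀ d) = d := by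
  have hd' : d < (Finset.univ : Finset α).toList.length := by simpa using hd
  rw [digitSymbol, List.getD_eq_getElem _ _ hd']
  exact (Finset.nodup_toList _).idxOf_getElem d hd'

noncomputable def numeralCode (a₀ : α) (n : ℕ) : List α :=
  stutter ((Nat.digits (Fintype.card α) n).map (digitSymbol a₀)) ++
    [digitSymbol a₀ 0, digitSymbol a₀ 1]

theorem length_numeralCode (a₀ : α) (n : ℕ) :
    (numeralCode a₀ n).length = 2 * (Nat.digits (Fintype.card α) n).length + 2 := by
  simp [numeralCode, length_stutter]

theorem eq_of_numeralCode_prefix (hα : 1 < Fintype.card α) (a₀ : α) {n m : ℕ}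
    (h : numeralCode a₀ n <+: numeralCode a₀ m) : n = m := by
  have hdigits : ∀ n, ((Nat.digits (Fintype.card α) n).map (digitSymbol a₀)).map
      (Finset.univ : Finset α).toList.idxOf = Nat.digits (Fintype.card α) n := fun n => by
    rw [List.map_map]
    exact (List.map_congr_left fun d hd =>
      idxOf_digitSymbol a₀ (Nat.digits_lt_base hα hd)).trans (List.map_id _)
  have h01 : digitSymbol a₀ 0 ≠ digitSymbol a₀ 1 := fun h01 => by
    simpa [idxOf_digitSymbol a₀ (by omega : 0 < Fintype.card α),
      idxOf_digitSymbol a₀ hα] using congrArg (Finset.univ : Finset α).toList.idxOf h01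
  have := congrArg (List.map (Finset.univ : Finset α).toList.idxOf)
    (eq_of_stutter_append_prefix h01 h)
  rwa [hdigits, hdigits, Nat.digits_inj_iff] at this

theorem numeralCode_injective (hα : 1 < Fintype.card α) (a₀ : α) :
    Function.Injective (numeralCode a₀) := fun _ _ h =>
  eq_of_numeralCode_prefix hα a₀ (h ▸ List.prefix_refl _)

theorem prefixFree_range_numeralCode (hα : 1 < Fintype.card α) (a₀ : α) :
    PrefixFree (Set.range (numeralCode a₀)) := by
  rintro _ ⟨n, rfl⟩ _ ⟨m, rfl⟩ h
  rw [eq_of_numeralCode_prefix hα a₀ h]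

theorem computable_numeralCode [Primcodable α] (hα : 1 < Fintype.card α) (a₀ : α) :
    Computable (numeralCode a₀) := by
  have hsym : Primrec (digitSymbol a₀) :=
    (Primrec.list_getD a₀).comp (Primrec.const _) Primrec.id
  refine Primrec.to_comp (Primrec.list_append.comp (Primrec.list_flatMap
    (Primrec.list_map (primrec_digits hα) (hsym.comp Primrec.snd).to₂) ?_) (Primrec.const _))
  exact (Primrec.list_cons.comp Primrec.snd
    (Primrec.list_cons.comp Primrec.snd (Primrec.const []))).to₂

end NumeralCode

/-- **Prefix-free complexity is bounded by plain complexity up to a logarithmic term.** -/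
theorem prefixFree_le_plain_add_log
    (α : Type) [Primcodable α] [Fintype α] (hα : 2 ≤ Fintype.card α)
    (sd : SelfDelim α) (U : UnivCond sd) (V : UnivCondPF sd) :
    ∃ c : ℕ, ∀ x y : List α,
      (KV V y x : ℝ) ≤ (CU U y x : ℝ)
        + 2 * Real.logb (Fintype.card α : ℝ) ((CU U y x : ℝ) + 1) + (c : ℝ) := by
  obtain ⟨a₀⟩ : Nonempty α := Fintype.card_pos_iff.1 (by omega)
  obtain ⟨k, hk⟩ := exists_KV_le_CU_add_length_code U V (computable_numeralCode hα a₀)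
    (numeralCode_injective hα a₀) (prefixFree_range_numeralCode hα a₀)
  refine ⟨k + 4, fun x y => ?_⟩
  have hK : (KV V y x : ℝ) ≤
      CU U y x + (2 * (Nat.digits (Fintype.card α) (CU U y x)).length + 2) + k := by
    have := hk x y
    rw [length_numeralCode] at this
    exact_mod_cast this
  have hdigits := length_digits_le_logb hα (CU U y x)
  push_cast
  linarith

end Quad
end

section
/- The expected conditional prefix-free complexity can exceed the conditional entropy by any amount: Fix a universal conditional prefix-free function V over the alphabet Σ. For every n ∈ ℕ there exists a probability mass function P on Σ* × Σ* such that E_{(X,Y)∼P}[K_V(Y∣X)] ≥ H_P(Y∣X) + n, where H_P(Y∣X) := E_{(X,Y)∼P}[−log_{|Σ|} P(Y∣X)] is the conditional Shannon entropy to base |Σ| (P(y∣x) denoting the conditional probability of Y = y given X = x under P). -/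
open scoped Classical ENNReal NNReal

namespace Quad

/-!
A point mass at `(x, y)` has conditional entropy `0` and expected complexity `K_V(y ∣ x)`, so it
suffices that `K_V(· ∣ x)` is unbounded. Universality applied to the machine that outputs `y` on
the empty input after `x̄` gives every `y` a program; distinct `y` need distinct programs, and
only finitely many programs are shorter than `n`.
-/

namespace SelfDelim

variable {α : Type} [Primcodable α] (sd : SelfDelim α)

theorem eq_nil_of_enc_append_mem_range {x w : List α}
    (h : sd.enc x ++ w ∈ Set.range sd.enc) : w = [] := by
  obtain ⟨x', hx'⟩ := h
  have hxx' : sd.enc x = sd.enc x' := sd.img_pf _ ⟨x, rfl⟩ _ ⟨x', rfl⟩ ⟨w, hx'.symm⟩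
  simpa [← hxx'] using hx'

noncomputable def constMachine (y : List α) : List α →. List α :=
  fun u => if u ∈ Set.range sd.enc then Part.some y else Part.none

theorem constMachine_partrec (y : List α) : Partrec (sd.constMachine y) := by
  obtain ⟨_, hdecide⟩ := sd.img_comp
  refine (Partrec.cond hdecide (Computable.const y).partrec Partrec.none).of_eq fun u => ?_
  by_cases h : u ∈ Set.range sd.enc <;> simp [constMachine, h]

theorem constMachine_enc (x y : List α) : sd.constMachine y (sd.enc x) = Part.some y := by
  simp [constMachine]

theorem eq_nil_of_constMachine_dom {x w y : List α}
    (h : (sd.constMachine y (sd.enc x ++ w)).Dom) : w = [] := by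
  by_contra hw
  have hmem : sd.enc x ++ w ∉ Set.range sd.enc := fun hmem =>
    hw (sd.eq_nil_of_enc_append_mem_range hmem)
  simp [constMachine, hmem] at h

theorem condPF_constMachine (y : List α) : CondPF sd (sd.constMachine y) := by
  intro x a ha b hb _
  rw [sd.eq_nil_of_constMachine_dom ha, sd.eq_nil_of_constMachine_dom hb]

end SelfDelim

namespace UnivCondPF

variable {α : Type} [Primcodable α] {sd : SelfDelim α} (V : UnivCondPF sd)

theorem exists_program (y x : List α) : ∃ p : List α, V.V (sd.enc x ++ p) = Part.some y := by
  obtain ⟨p, -, hp⟩ := V.univ _ (sd.constMachine_partrec y) (sd.condPF_constMachine y)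
  exact ⟨p, by simpa [sd.constMachine_enc] using hp x []⟩

theorem exists_program_length_eq_KV (y x : List α) :
    ∃ p : List α, p.length = KV V y x ∧ V.V (sd.enc x ++ p) = Part.some y := by
  obtain ⟨p, hp⟩ := V.exists_program y x
  exact Nat.sInf_mem
    (s := {m | ∃ p : List α, p.length = m ∧ V.V (sd.enc x ++ p) = Part.some y})
    ⟨p.length, p, rfl, hp⟩

theorem exists_le_KV [Finite α] [Nonempty α] (x : List α) (n : ℕ) :
    ∃ y : List α, n ≤ KV V y x := by
  by_contra! hlt
  choose prog hlen hprog using fun y => V.exists_program_length_eq_KV y x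
  have hinj : Function.Injective prog := fun y₁ y₂ h =>
    Part.some_inj.1 ((hprog y₁).symm.trans (h ▸ hprog y₂))
  have hshort : Set.univ ⊆ prog ⁻¹' {p : List α | p.length < n} := fun y _ => by
    simpa [hlen y] using hlt y
  exact Set.infinite_univ
    (((List.finite_length_lt α n).preimage hinj.injOn).subset hshort)

end UnivCondPF

theorem tsum_ofReal_ite_eq_mul {β : Type*} [DecidableEq β] (b : β) (f : β → ℝ≥0∞) :
    ∑' z, ENNReal.ofReal (if z = b then 1 else 0) * f z = f b := by
  rw [tsum_eq_single b fun z hz => by simp [hz]]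
  simp

/-- **The expected conditional prefix-free complexity can exceed the conditional entropy
by any amount.** Conditional entropy and expectation are taken in `ℝ≥0∞`; the conditional
probability of `y` given `x` under `P` is `P (x,y) / ∑' y', P (x,y')`. -/
theorem expected_complexity_exceeds_entropy
    (α : Type) [Primcodable α] [Fintype α] (hα : 2 ≤ Fintype.card α)
    (sd : SelfDelim α) (V : UnivCondPF sd) :
    ∀ n : ℕ, ∃ P : List α × List α → ℝ,
      (∀ z, 0 ≤ P z) ∧ HasSum P 1 ∧
      (∑' z : List α × List α, ENNReal.ofReal (P z) *
          ENNReal.ofReal (-(Real.logb (Fintype.card α : ℝ)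
            (P z / ∑' y : List α, P (z.1, y)))))
        + (n : ℝ≥0∞)
      ≤ ∑' z : List α × List α, ENNReal.ofReal (P z) * (KV V z.2 z.1 : ℝ≥0∞) := by
  intro n
  have : Nonempty α := Fintype.card_pos_iff.mp (by omega)
  obtain ⟨y, hy⟩ := V.exists_le_KV [] n
  refine ⟨fun z => if z = ([], y) then 1 else 0, fun z => by positivity, hasSum_ite_eq _ 1, ?_⟩
  beta_reduce
  rw [tsum_ofReal_ite_eq_mul, tsum_ofReal_ite_eq_mul]
  simpa using hy

end Quad
end

section
/- Kullback–Leibler divergence bound for a two-point perturbation of a probability mass function: Let b ≥ 2 be an integer, let Y be an at most countable set, let q : Y → (0,1] be a probability mass function with full support (∑_{y∈Y} q(y) = 1 and q(y) > 0 for all y), let η, η' ∈ Y be distinct, and let δ be a real number with 0 < δ < q(η'). Define p : Y → ℝ by p(y) := q(y) for y ∉ {η, η'}, p(η) := q(η) + δ, and p(η') := q(η') − δ. Then p is a probability mass function, and D_KL(p‖q) := ∑_{y∈Y} p(y)·log_b(p(y)/q(y)) satisfies D_KL(p‖q) ≤ (δ²/ln b)·(1/q(η) + 1/q(η')). -/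
open scoped Classical ENNReal NNReal

namespace Quad

/-!
Off the perturbed points `p = q`, so only those points contribute to the divergence. At each
of them `log x ≤ x - 1` gives `p log (p / q) ≤ (p - q)² / q + (p - q)`, and the linear terms
cancel because the perturbation preserves total mass; this leaves `δ² (1 / q η + 1 / q η')`.
-/

theorem mul_log_div_le_sq_sub_div_add_sub {p q : ℝ} (hp : 0 ≤ p) (hq : 0 < q) :
    p * Real.log (p / q) ≤ (p - q) ^ 2 / q + (p - q) := by
  rcases hp.eq_or_lt with rfl | hp
  · simp [sq, mul_div_cancel_right₀ _ hq.ne']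
  calc p * Real.log (p / q) ≤ p * (p / q - 1) :=
        mul_le_mul_of_nonneg_left (Real.log_le_sub_one_of_pos (div_pos hp hq)) hp.le
    _ = (p - q) ^ 2 / q + (p - q) := by field_simp; ring

section FinitePerturbation

variable {Y : Type*} {p q : Y → ℝ} {s : Finset Y}

theorem hasSum_of_eqOn_compl_of_sum_eq {a : ℝ} (hq : HasSum q a)
    (hpq : ∀ y ∉ s, p y = q y) (hsum : ∑ y ∈ s, p y = ∑ y ∈ s, q y) : HasSum p a := by
  have hdiff : HasSum (fun y => p y - q y) (∑ y ∈ s, (p y - q y)) :=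
    hasSum_sum_of_ne_finset_zero fun y hy => sub_eq_zero.2 (hpq y hy)
  rw [Finset.sum_sub_distrib, hsum, sub_self] at hdiff
  simpa using hq.add hdiff

theorem tsum_mul_logb_div_le_of_eqOn_compl {b : ℝ} (hb : 1 < b)
    (hpq : ∀ y ∉ s, p y = q y) (hp : ∀ y ∈ s, 0 ≤ p y) (hq : ∀ y ∈ s, 0 < q y)
    (hsum : ∑ y ∈ s, p y = ∑ y ∈ s, q y) :
    ∑' y, p y * Real.logb b (p y / q y) ≤ (∑ y ∈ s, (p y - q y) ^ 2 / q y) / Real.log b := by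
  have hvanish : ∀ y ∉ s, p y * Real.logb b (p y / q y) = 0 := by
    intro y hy
    rw [hpq y hy]
    rcases eq_or_ne (q y) 0 with h | h
    · simp [h]
    · simp [div_self h]
  have hlinear : ∑ y ∈ s, (p y - q y) = 0 := by
    rw [Finset.sum_sub_distrib, hsum, sub_self]
  rw [tsum_eq_sum hvanish, le_div_iff₀ (Real.log_pos hb), Finset.sum_mul]
  calc ∑ y ∈ s, p y * Real.logb b (p y / q y) * Real.log b
        = ∑ y ∈ s, p y * Real.log (p y / q y) := by
          refine Finset.sum_congr rfl fun y _ => ?_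
          rw [Real.logb, mul_assoc, div_mul_cancel₀ _ (Real.log_pos hb).ne']
    _ ≤ ∑ y ∈ s, ((p y - q y) ^ 2 / q y + (p y - q y)) :=
          Finset.sum_le_sum fun y hy => mul_log_div_le_sq_sub_div_add_sub (hp y hy) (hq y hy)
    _ = ∑ y ∈ s, (p y - q y) ^ 2 / q y := by rw [Finset.sum_add_distrib, hlinear, add_zero]

end FinitePerturbation

theorem kl_bound_two_point_perturbation_general
    (b : ℕ) (hb : 2 ≤ b)
    (Y : Type)
    (q : Y → ℝ) (hq0 : ∀ y, 0 < q y) (hq1 : HasSum q 1)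
    (η η' : Y) (hne : η ≠ η')
    (δ : ℝ) (hδ0 : 0 < δ) (hδ : δ < q η')
    (p : Y → ℝ)
    (hp : ∀ y, p y = if y = η then q η + δ else if y = η' then q η' - δ else q y) :
    (∀ y, 0 ≤ p y) ∧ HasSum p 1 ∧
    (∑' y : Y, p y * Real.logb (b : ℝ) (p y / q y))
      ≤ δ ^ 2 / Real.log (b : ℝ) * (1 / q η + 1 / q η') := by
  have hpη : p η = q η + δ := by simp [hp]
  have hpη' : p η' = q η' - δ := by simp [hp, hne.symm]
  have hpq : ∀ y ∉ ({η, η'} : Finset Y), p y = q y := by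
    intro y hy
    simp only [Finset.mem_insert, Finset.mem_singleton, not_or] at hy
    simp [hp, hy.1, hy.2]
  have hp0 : ∀ y, 0 ≤ p y := by
    intro y
    by_cases hy : y ∈ ({η, η'} : Finset Y)
    · rcases Finset.mem_insert.1 hy with rfl | hy
      · rw [hpη]; linarith [hq0 y]
      · rw [Finset.mem_singleton.1 hy, hpη']; linarith
    · exact hpq y hy ▸ (hq0 y).le
  have hsum : ∑ y ∈ {η, η'}, p y = ∑ y ∈ {η, η'}, q y := by
    rw [Finset.sum_pair hne, Finset.sum_pair hne, hpη, hpη']; ring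
  have hb1 : (1 : ℝ) < b := by exact_mod_cast hb
  refine ⟨hp0, hasSum_of_eqOn_compl_of_sum_eq hq1 hpq hsum, ?_⟩
  calc ∑' y, p y * Real.logb b (p y / q y)
      ≤ (∑ y ∈ {η, η'}, (p y - q y) ^ 2 / q y) / Real.log b :=
        tsum_mul_logb_div_le_of_eqOn_compl hb1 hpq (fun y _ => hp0 y) (fun y _ => hq0 y) hsum
    _ = δ ^ 2 / Real.log b * (1 / q η + 1 / q η') := by
        rw [Finset.sum_pair hne, hpη, hpη']; ring

/-- **Kullback–Leibler divergence bound for a two-point perturbation of a probability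
mass function.** -/
theorem kl_bound_two_point_perturbation
    (b : ℕ) (hb : 2 ≤ b)
    (Y : Type) [Countable Y]
    (q : Y → ℝ) (hq0 : ∀ y, 0 < q y) (hq1le : ∀ y, q y ≤ 1) (hq1 : HasSum q 1)
    (η η' : Y) (hne : η ≠ η')
    (δ : ℝ) (hδ0 : 0 < δ) (hδ : δ < q η')
    (p : Y → ℝ)
    (hp : ∀ y, p y = if y = η then q η + δ else if y = η' then q η' - δ else q y) :
    (∀ y, 0 ≤ p y) ∧ HasSum p 1 ∧
    (∑' y : Y, p y * Real.logb (b : ℝ) (p y / q y))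
      ≤ δ ^ 2 / Real.log (b : ℝ) * (1 / q η + 1 / q η') :=
  kl_bound_two_point_perturbation_general b hb Y q hq0 hq1 η η' hne δ hδ0 hδ p hp

end Quad
end
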